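/- Assume f* : ℝ^n → ℝ is finite everywhere and differentiable, that for every u ∈ ℝ^n the supremum defining f*(u) is attained at ∇f*(u), and that f* is V-smooth for some V : ℝ^n → [0, ∞) with V(0) = 0. Let λ_0 > λ_1 > ⋯ > λ_{T−1} > 0 (T ≥ 2) and, for each t, let (β_t, θ_t) ∈ ℝ^p × ℝ^n with Ω(β_t) and Ω*(X^⊤θ_t) finite. Then sup_{λ ∈ [λ_{T−1}, λ_0]} min_{0 ≤ t ≤ T−1} Gap_λ(β_t, θ_t) ≤ max_{0 ≤ t ≤ T−2} sup_{λ ∈ [λ_{t+1}, λ_t]} min( Q_{t,V}(1 − λ/λ_t), Q_{t+1,V}(1 − λ/λ_{t+1}) ). -/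

import Mathlib

open scoped RealInnerProductSpace

noncomputable section

abbrev Vec (d : ℕ) := EuclideanSpace ℝ (Fin d)

/-- Matrix–vector product, landing in Euclidean space. -/
def mv {a b : ℕ} (M : Matrix (Fin a) (Fin b) ℝ) (v : Vec b) : Vec a := WithLp.toLp 2 (M.mulVec v)

/-- Fenchel conjugate of a real-valued function, with values in `EReal`. -/
noncomputable def rconj {d : ℕ} (f : Vec d → ℝ) (u : Vec d) : EReal :=
  ⨆ x, ((⟪u, x⟫ - f x : ℝ) : EReal)

/-- Fenchel conjugate of an `EReal`-valued function. -/
noncomputable def econj {d : ℕ} (g : Vec d → EReal) (u : Vec d) : EReal :=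
  ⨆ x, (((⟪u, x⟫ : ℝ) : EReal) - g x)

/-!
At parameter `λ = (1 - ρ) λ_t` the dual point `-λ θ_t` is `(1 - ρ) ζ_t`, so only the term
`f*(-λ θ_t)` of the gap is not affine in `λ`. Expanding `f*` at `ζ_t` to first order, with the
`V`-smoothness remainder, and using `f*(ζ_t) = ⟨ζ_t, z_t⟩ - f(z_t)` with `z_t = ∇f*(ζ_t)`, bounds
`Gap_λ(β_t, θ_t)` by `Q_{t,V}(1 - λ/λ_t)` for every `λ`; on `[λ_{t+1}, λ_t]` one then bounds the
minimum over all iterates by the gaps of `t` and `t + 1`.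
-/

theorem apply_one_sub_smul_le_of_smooth {E : Type*} [NormedAddCommGroup E]
    [InnerProductSpace ℝ E] {h g φ : E → ℝ} {h' : E → E}
    (hsm : ∀ x z, h z - h x - ⟪h' x, z - x⟫ ≤ φ (z - x))
    {ζ : E} (hatt : h ζ = ⟪ζ, h' ζ⟫ - g (h' ζ)) (ρ : ℝ) :
    h ((1 - ρ) • ζ) ≤ (1 - ρ) * h ζ - ρ * g (h' ζ) + φ ((-ρ) • ζ) := by
  have hstep : (1 - ρ) • ζ - ζ = (-ρ) • ζ := by module
  have hlin : ⟪h' ζ, (-ρ) • ζ⟫ = -ρ * ⟪ζ, h' ζ⟫ := by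
    rw [real_inner_smul_right, real_inner_comm]
  have := hsm ζ ((1 - ρ) • ζ)
  rw [hstep, hlin] at this
  linear_combination this + ρ * hatt

theorem exists_mem_Icc_succ_of_mem_Icc {α : Type*} [LinearOrder α] (u : ℕ → α) {x : α} :
    ∀ N, x ∈ Set.Icc (u (N + 1)) (u 0) → ∃ t ≤ N, x ∈ Set.Icc (u (t + 1)) (u t)
  | 0, hx => ⟨0, le_rfl, hx⟩
  | N + 1, hx => by
    by_cases hxN : x ≤ u (N + 1)
    · exact ⟨N + 1, le_rfl, hx.1, hxN⟩
    · obtain ⟨t, htN, ht⟩ :=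
        exists_mem_Icc_succ_of_mem_Icc u N ⟨(not_le.1 hxN).le, hx.2⟩
      exact ⟨t, htN.trans N.le_succ, ht⟩

theorem stmt12_general {n p : ℕ} (X : Matrix (Fin n) (Fin p) ℝ)
    (f : Vec n → ℝ)
    (fstar : Vec n → ℝ)
    (fstar' : Vec n → Vec n)
    (hatt : ∀ u, fstar u = ⟪u, fstar' u⟫ - f (fstar' u))
    (V : Vec n → ℝ)
    (hsm : ∀ x z : Vec n, fstar z - fstar x - ⟪fstar' x, z - x⟫ ≤ V (z - x))
    (T : ℕ) (hT : 2 ≤ T)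
    (lam : ℕ → ℝ)
    (hpos : ∀ t < T, 0 < lam t)
    (β : ℕ → Vec p) (θ : ℕ → Vec n) (Ωβ Ωs : ℕ → ℝ)
    (Gap : ℝ → ℕ → ℝ)
    (hGapdef : ∀ l t, Gap l t =
      f (mv X (β t)) + fstar ((-l) • θ t) + l * (Ωβ t + Ωs t))
    (Q : ℕ → ℝ → ℝ)
    (hQdef : ∀ t ρ, Q t ρ =
      Gap (lam t) t
        + ρ * ((f (mv X (β t)) - f (fstar' ((-(lam t)) • θ t))) - Gap (lam t) t)
        + V ((-ρ) • ((-(lam t)) • θ t))) :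
    (⨆ l ∈ Set.Icc (lam (T - 1)) (lam 0),
        ⨅ t : Fin T, ((Gap l t : ℝ) : EReal))
      ≤ ⨆ t ∈ Finset.range (T - 1), ⨆ l ∈ Set.Icc (lam (t + 1)) (lam t),
          ((min (Q t (1 - l / lam t)) (Q (t + 1) (1 - l / lam (t + 1))) : ℝ) : EReal) := by
  have gap_le_Q : ∀ s < T, ∀ l, Gap l s ≤ Q s (1 - l / lam s) := by
    intro s hs l
    have hscale : (1 - (1 - l / lam s)) * lam s = l := by field_simp [(hpos s hs).ne']; ring
    have hdual : (-l) • θ s = (1 - (1 - l / lam s)) • ((-lam s) • θ s) := by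
      rw [smul_smul, mul_neg, hscale]
    have hbound := apply_one_sub_smul_le_of_smooth hsm (hatt ((-lam s) • θ s)) (1 - l / lam s)
    rw [hQdef, hGapdef, hGapdef, hdual]
    linear_combination hbound - (Ωβ s + Ωs s) * hscale
  refine iSup₂_le fun l hl => ?_
  obtain ⟨t, ht, hlt⟩ := exists_mem_Icc_succ_of_mem_Icc lam (T - 2)
    (by rwa [show T - 2 + 1 = T - 1 by omega])
  refine le_iSup₂_of_le t (Finset.mem_range.2 (by omega)) (le_iSup₂_of_le l hlt ?_)
  rw [EReal.coe_strictMono.monotone.map_min]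
  exact le_min (iInf_le_of_le ⟨t, by omega⟩ (EReal.coe_le_coe (gap_le_Q t (by omega) l)))
    (iInf_le_of_le ⟨t + 1, by omega⟩ (EReal.coe_le_coe (gap_le_Q (t + 1) (by omega) l)))

/-- Proposition: precision for a given grid.
`f*` is everywhere finite (real values `fstar`), differentiable with gradient
`fstar'` at which its defining supremum is attained, and `V`-smooth.
`Gap l t` is the duality gap at parameter `l` of the primal/dual pair
`(β_t, θ_t)`, and `Q t ρ = Gap_t + ρ(Δ_t - Gap_t) + V(-ρ • ζ_t)`.  Then
`sup_{λ ∈ [λ_{T-1}, λ_0]} min_t Gap_λ(β_t, θ_t)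
  ≤ max_{0 ≤ t ≤ T-2} sup_{λ ∈ [λ_{t+1}, λ_t]} min (Q t (1 - λ/λ_t)) (Q (t+1) (1 - λ/λ_{t+1}))`. -/
theorem stmt12 {n p : ℕ} (X : Matrix (Fin n) (Fin p) ℝ)
    (f : Vec n → ℝ) (hconv : ConvexOn ℝ Set.univ f)
    (Ω : Vec p → EReal)
    (fstar : Vec n → ℝ)
    (hconj : ∀ u, rconj f u = ((fstar u : ℝ) : EReal))
    (fstar' : Vec n → Vec n)
    (hdiff : ∀ u, HasGradientAt fstar (fstar' u) u)
    (hatt : ∀ u, fstar u = ⟪u, fstar' u⟫ - f (fstar' u))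
    (V : Vec n → ℝ) (hV0 : V 0 = 0) (hVnn : ∀ v, 0 ≤ V v)
    (hsm : ∀ x z : Vec n, fstar z - fstar x - ⟪fstar' x, z - x⟫ ≤ V (z - x))
    (T : ℕ) (hT : 2 ≤ T)
    (lam : ℕ → ℝ)
    (hpos : ∀ t < T, 0 < lam t)
    (hdec : ∀ t, t + 1 < T → lam (t + 1) < lam t)
    (β : ℕ → Vec p) (θ : ℕ → Vec n) (Ωβ Ωs : ℕ → ℝ)
    (hΩβ : ∀ t < T, Ω (β t) = ((Ωβ t : ℝ) : EReal))
    (hΩs : ∀ t < T, econj Ω (mv X.transpose (θ t)) = ((Ωs t : ℝ) : EReal))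
    (Gap : ℝ → ℕ → ℝ)
    (hGapdef : ∀ l t, Gap l t =
      f (mv X (β t)) + fstar ((-l) • θ t) + l * (Ωβ t + Ωs t))
    (Q : ℕ → ℝ → ℝ)
    (hQdef : ∀ t ρ, Q t ρ =
      Gap (lam t) t
        + ρ * ((f (mv X (β t)) - f (fstar' ((-(lam t)) • θ t))) - Gap (lam t) t)
        + V ((-ρ) • ((-(lam t)) • θ t))) :
    (⨆ l ∈ Set.Icc (lam (T - 1)) (lam 0),
        ⨅ t : Fin T, ((Gap l t : ℝ) : EReal))
      ≤ ⨆ t ∈ Finset.range (T - 1), ⨆ l ∈ Set.Icc (lam (t + 1)) (lam t),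
          ((min (Q t (1 - l / lam t)) (Q (t + 1) (1 - l / lam (t + 1))) : ℝ) : EReal) :=
  stmt12_general X f fstar fstar' hatt V hsm T hT lam hpos β θ Ωβ Ωs Gap hGapdef Q hQdef

end
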